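/- Let N ≥ 1, K ≥ 0 with 2K+1 ≤ N, and φ ∈ ℂ^N with ‖φ‖ = 1. Then the average over Δ uniform on [-1/(2N), 1/(2N)] of ∑_{j=-K}^{K} |φ̂(Δ + j/N)|² equals the quadratic form ∑_{n,m=0}^{N-1} C(n,m) conj(φ[n]) φ[m], where C(n,m) = sin(π(m-n)(2K+1)/N)/(π(m-n)) for m ≠ n and C(n,n) = (2K+1)/N. -/

import Mathlib

open Complex Real intervalIntegral

/-- The prolate (DPSS) kernel `C(n,m)`. -/
noncomputable def prolateC (N K : ℕ) (n m : Fin N) : ℝ :=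
  if m = n then (2 * K + 1 : ℝ) / N
  else Real.sin (Real.pi * (((m : ℤ) - (n : ℤ) : ℤ) : ℝ) * (2 * K + 1) / N) /
    (Real.pi * (((m : ℤ) - (n : ℤ) : ℤ) : ℝ))

/-!
Expanding the square, `|φ̂(t)|² = ∑_{n,m} conj φ[n] φ[m] e^{2πi(m-n)t}`. The windows
`[-1/(2N), 1/(2N)] + j/N`, `|j| ≤ K`, tile `[-L, L]` with `L = (2K+1)/(2N)`, so averaging over `Δ`
and summing over `j` is integrating over `[-L, L]`, and `∫_{-L}^{L} e^{2πidt} dt = sin(2πdL)/(πd)`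
is `C(n, m)` for `d = m - n`.
-/

open MeasureTheory
open scoped ComplexConjugate

theorem sum_integral_adjacent_intervals_Ico_int {E : Type*} [NormedAddCommGroup E]
    [NormedSpace ℝ E] {f : ℝ → E} (hf : Continuous f) {μ : Measure ℝ} [IsLocallyFiniteMeasure μ]
    (u : ℤ → ℝ) {m n : ℤ} (hmn : m ≤ n) :
    ∑ k ∈ Finset.Ico m n, ∫ x in u k..u (k + 1), f x ∂μ = ∫ x in u m..u n, f x ∂μ := by
  induction n, hmn using Int.leInduction with
  | base => simp
  | succ n hmn ih =>
    rw [← Finset.sum_Ico_add_eq_sum_Ico_add_one hmn, ih,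
      integral_add_adjacent_intervals (hf.intervalIntegrable _ _) (hf.intervalIntegrable _ _)]

theorem sum_integral_comp_add_int_mul {E : Type*} [NormedAddCommGroup E] [NormedSpace ℝ E]
    {f : ℝ → E} (hf : Continuous f) (a b : ℝ) (K : ℕ) :
    ∑ j ∈ Finset.Icc (-(K : ℤ)) K, ∫ x in a..b, f (x + j * (b - a)) =
      ∫ x in a - K * (b - a)..b + K * (b - a), f x := by
  have hshift : ∀ j : ℤ, ∫ x in a..b, f (x + j * (b - a)) =
      ∫ x in a + j * (b - a)..a + (j + 1 : ℤ) * (b - a), f x := by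
    intro j
    rw [integral_comp_add_right]
    congr 1; push_cast; ring
  simp_rw [hshift]
  rw [← Finset.Ico_add_one_right_eq_Icc,
    sum_integral_adjacent_intervals_Ico_int hf (fun j : ℤ => a + j * (b - a)) (by omega)]
  congr 1 <;> (push_cast; ring)

theorem sq_norm_sum_mul_cexp {ι : Type*} (s : Finset ι) (a : ι → ℂ) (ξ : ι → ℝ) (t : ℝ) :
    ((‖∑ n ∈ s, a n * cexp (2 * π * I * ξ n * t)‖ ^ 2 : ℝ) : ℂ) =
      ∑ n ∈ s, ∑ m ∈ s, conj (a n) * a m * cexp (2 * π * I * (ξ m - ξ n : ℝ) * t) := by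
  rw [ofReal_pow, ← conj_mul', map_sum, Finset.sum_mul_sum]
  refine Finset.sum_congr rfl fun n _ => Finset.sum_congr rfl fun m _ => ?_
  rw [map_mul, ← exp_conj, mul_mul_mul_comm, ← Complex.exp_add]
  congr 2
  simp only [map_mul, map_ofNat, conj_ofReal, conj_I]
  push_cast
  ring

theorem integral_sq_norm_sum_mul_cexp {ι : Type*} (s : Finset ι) (a : ι → ℂ) (ξ : ι → ℝ)
    (u v : ℝ) :
    ((∫ t in u..v, ‖∑ n ∈ s, a n * cexp (2 * π * I * ξ n * t)‖ ^ 2 : ℝ) : ℂ) =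
      ∑ n ∈ s, ∑ m ∈ s,
        conj (a n) * a m * ∫ t in u..v, cexp (2 * π * I * (ξ m - ξ n : ℝ) * t) := by
  rw [← integral_ofReal]
  simp_rw [sq_norm_sum_mul_cexp]
  rw [integral_finsetSum fun n _ => Continuous.intervalIntegrable (by fun_prop) _ _]
  refine Finset.sum_congr rfl fun n _ => ?_
  rw [integral_finsetSum fun m _ => Continuous.intervalIntegrable (by fun_prop) _ _]
  exact Finset.sum_congr rfl fun m _ => integral_const_mul _ _

theorem integral_cexp_two_pi_I_mul_symm {ξ : ℝ} (hξ : ξ ≠ 0) (L : ℝ) :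
    ∫ t in -L..L, cexp (2 * π * I * ξ * t) = ((Real.sin (2 * π * ξ * L) / (π * ξ) : ℝ) : ℂ) := by
  have hc : 2 * π * I * ξ ≠ 0 := by simp [hξ, Real.pi_ne_zero]
  set θ : ℂ := 2 * π * ξ * L
  have hL : 2 * π * I * ξ * L = θ * I := by ring
  have hnegL : 2 * π * I * ξ * ((-L : ℝ) : ℂ) = -θ * I := by push_cast; ring
  rw [integral_exp_mul_complex hc, hL, hnegL, exp_mul_I, exp_mul_I, Complex.cos_neg,
    Complex.sin_neg]
  push_cast
  field_simp
  ring

theorem prolateC_eq_integral (N K : ℕ) (n m : Fin N) :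
    (prolateC N K n m : ℂ) = ∫ t in -((2 * K + 1) / (2 * N))..((2 * K + 1) / (2 * N) : ℝ),
      cexp (2 * π * I * ((m : ℝ) - (n : ℝ) : ℝ) * t) := by
  unfold prolateC
  split_ifs with hmn
  · subst hmn
    simp only [sub_self, ofReal_zero, mul_zero, zero_mul, Complex.exp_zero,
      intervalIntegral.integral_const, real_smul, mul_one]
    push_cast
    ring
  · have hξ : ((m : ℝ) - (n : ℝ)) ≠ 0 := by
      rw [sub_ne_zero]; exact_mod_cast Fin.val_injective.ne hmn
    rw [integral_cexp_two_pi_I_mul_symm hξ]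
    push_cast
    congr 2
    field_simp

theorem average_case_kernel_general (N K : ℕ) (hN : 1 ≤ N) (φ : Fin N → ℂ) :
    (((N : ℝ) * ∫ Δ in (-(1 / (2 * (N : ℝ))))..(1 / (2 * (N : ℝ))),
        ∑ j ∈ Finset.Icc (-(K : ℤ)) (K : ℤ),
          ‖(1 / (Real.sqrt N : ℂ)) *
            ∑ n : Fin N, φ n *
              Complex.exp (2 * Real.pi * Complex.I * (n.val : ℂ) *
                ((Δ + (j : ℝ) / N : ℝ) : ℂ))‖ ^ 2 : ℝ) : ℂ)
    = ∑ n : Fin N, ∑ m : Fin N,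
        ((prolateC N K n m : ℝ) : ℂ) * (starRingEnd ℂ) (φ n) * φ m := by
  have hN₀ : (N : ℝ) ≠ 0 := by positivity
  set F : ℝ → ℝ := fun t => ‖∑ n : Fin N, φ n * cexp (2 * π * I * ((n : ℝ) : ℂ) * t)‖ ^ 2
  have hF : Continuous F := by fun_prop
  have hscale (t : ℝ) :
      ‖(1 / (√N : ℂ)) * ∑ n : Fin N, φ n * cexp (2 * π * I * (n : ℂ) * t)‖ ^ 2 = F t / N := by
    rw [norm_mul, mul_pow, norm_div, norm_one, norm_real, Real.norm_of_nonneg (Real.sqrt_nonneg _),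
      div_pow, Real.sq_sqrt (Nat.cast_nonneg _), one_pow, one_div_mul_eq_div]
    simp only [F, ofReal_natCast]
  have htile := sum_integral_comp_add_int_mul hF (-(1 / (2 * N))) (1 / (2 * N)) K
  rw [show (1 / (2 * N) - -(1 / (2 * N)) : ℝ) = (N : ℝ)⁻¹ by ring] at htile
  simp only [← div_eq_mul_inv] at htile
  calc _ = ((∫ t in -((2 * K + 1) / (2 * N))..((2 * K + 1) / (2 * N) : ℝ), F t : ℝ) : ℂ) := by
        simp only [hscale]
        rw [integral_finsetSum fun j _ => Continuous.intervalIntegrable (by fun_prop) _ _]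
        simp only [intervalIntegral.integral_div, ← Finset.sum_div, htile, mul_div_cancel₀ _ hN₀]
        congr 3 <;> (field_simp; ring)
    _ = ∑ n : Fin N, ∑ m : Fin N, conj (φ n) * φ m *
          ∫ t in -((2 * K + 1) / (2 * N))..((2 * K + 1) / (2 * N) : ℝ),
            cexp (2 * π * I * ((m : ℝ) - (n : ℝ) : ℝ) * t) :=
        integral_sq_norm_sum_mul_cexp _ _ _ _ _
    _ = _ := by
        refine Finset.sum_congr rfl fun n _ => Finset.sum_congr rfl fun m _ => ?_
        rw [prolateC_eq_integral]
        ring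

theorem average_case_kernel (N K : ℕ) (hN : 1 ≤ N) (hK : 2 * K + 1 ≤ N) (φ : Fin N → ℂ)
    (hnorm : ∑ n : Fin N, ‖φ n‖ ^ 2 = 1) :
    (((N : ℝ) * ∫ Δ in (-(1 / (2 * (N : ℝ))))..(1 / (2 * (N : ℝ))),
        ∑ j ∈ Finset.Icc (-(K : ℤ)) (K : ℤ),
          ‖(1 / (Real.sqrt N : ℂ)) *
            ∑ n : Fin N, φ n *
              Complex.exp (2 * Real.pi * Complex.I * (n.val : ℂ) *
                ((Δ + (j : ℝ) / N : ℝ) : ℂ))‖ ^ 2 : ℝ) : ℂ)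
    = ∑ n : Fin N, ∑ m : Fin N,
        ((prolateC N K n m : ℝ) : ℂ) * (starRingEnd ℂ) (φ n) * φ m :=
  average_case_kernel_general N K hN φ
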